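/- arXiv:2510.06240 — 6 statements merged into one kernel-verified Lean document; each statement's English description precedes it below -/
import Mathlib

section
/- Let 𝒴, 𝒮₁, 𝒮₂ be nonempty finite types, let p₂ : 𝒴 × 𝒮₂ → ℝ be a joint probability mass function, let k : 𝒮₂ × 𝒮₁ → ℝ be a Markov kernel (k ≥ 0 and ∑_{s₁} k(s₂, s₁) = 1 for every s₂), and define the garbled joint pmf p₁ : 𝒴 × 𝒮₁ → ℝ by p₁(y, s₁) = ∑_{s₂} p₂(y, s₂) · k(s₂, s₁). Then the conditional entropies satisfy H(Y|S₂) ≤ H(Y|S₁), i.e. −∑_{y,s₂} p₂(y,s₂) log(p₂(y,s₂)/q₂(s₂)) ≤ −∑_{y,s₁} p₁(y,s₁) log(p₁(y,s₁)/q₁(s₁)), where q₂(s₂) = ∑_y p₂(y,s₂) and q₁(s₁) = ∑_y p₁(y,s₁). (Under the log-score reward, a Blackwell-dominating observation yields at least as large an optimal expected reward.) -/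
open Finset

/-- Log-sum inequality. -/
lemma log_sum_le {ι : Type*} [Fintype ι] (a b : ι → ℝ)
    (ha : ∀ i, 0 ≤ a i) (hb : ∀ i, 0 ≤ b i) (hab : ∀ i, b i = 0 → a i = 0) :
    (∑ i, a i) * Real.log ((∑ i, a i) / (∑ i, b i)) ≤
      ∑ i, a i * Real.log (a i / b i) := by
  set A := ∑ i, a i with hA
  set B := ∑ i, b i with hB
  by_cases hB0 : B = 0
  · have hbz : ∀ i, b i = 0 := fun i =>
      (Finset.sum_eq_zero_iff_of_nonneg (fun i _ => hb i)).mp hB0 i (mem_univ i)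
    have haz : ∀ i, a i = 0 := fun i => hab i (hbz i)
    have hA0 : A = 0 := by simp [hA, haz]
    simp [hA0, haz]
  · have hBpos : 0 < B := lt_of_le_of_ne (Finset.sum_nonneg fun i _ => hb i) (Ne.symm hB0)
    have key := Real.convexOn_mul_log.map_centerMass_le (t := Finset.univ)
      (w := b) (p := fun i => a i / b i) (fun i _ => hb i) hBpos
      (fun i _ => div_nonneg (ha i) (hb i))
    have hcm : Finset.univ.centerMass b (fun i => a i / b i) = A / B := by
      rw [Finset.centerMass, ← hB]
      have : ∑ i, b i • (a i / b i) = A := by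
        rw [hA]
        refine Finset.sum_congr rfl fun i _ => ?_
        by_cases h : b i = 0
        · simp [h, hab i h]
        · simp only [smul_eq_mul]; field_simp
      rw [this, smul_eq_mul, div_eq_inv_mul]
    have hcm2 : Finset.univ.centerMass b ((fun x => x * Real.log x) ∘ fun i => a i / b i)
        = B⁻¹ * ∑ i, a i * Real.log (a i / b i) := by
      rw [Finset.centerMass, ← hB]
      congr 1
      refine Finset.sum_congr rfl fun i _ => ?_
      by_cases h : b i = 0
      · simp [h, hab i h]
      · simp only [Function.comp, smul_eq_mul]
        field_simp
    rw [hcm, hcm2] at key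
    have : A / B * Real.log (A / B) * B ≤ B⁻¹ * (∑ i, a i * Real.log (a i / b i)) * B :=
      mul_le_mul_of_nonneg_right key hBpos.le
    calc A * Real.log (A / B) = A / B * Real.log (A / B) * B := by field_simp
    _ ≤ B⁻¹ * (∑ i, a i * Real.log (a i / b i)) * B := this
    _ = ∑ i, a i * Real.log (a i / b i) := by field_simp

/-- Blackwell garbling decreases information: under the log-score reward, a
Blackwell-dominating observation has smaller (or equal) conditional entropy,
i.e. `H(Y|S₂) ≤ H(Y|S₁)` when `S₁` is a garbling of `S₂`.  All pmfs are real
valued functions on finite types; `Real.log 0 = 0` encodes the convention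
`0 · log 0 = 0`. -/
theorem conditional_entropy_le_of_garbling
    {Y S₁ S₂ : Type*} [Fintype Y] [Fintype S₁] [Fintype S₂]
    [Nonempty Y] [Nonempty S₁] [Nonempty S₂]
    (p₂ : Y × S₂ → ℝ) (hp₂0 : ∀ x, 0 ≤ p₂ x) (hp₂1 : ∑ x, p₂ x = 1)
    (k : S₂ × S₁ → ℝ) (hk0 : ∀ x, 0 ≤ k x) (hk1 : ∀ s₂, ∑ s₁, k (s₂, s₁) = 1)
    (p₁ : Y × S₁ → ℝ)
    (hp₁ : ∀ y s₁, p₁ (y, s₁) = ∑ s₂, p₂ (y, s₂) * k (s₂, s₁)) :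
    -∑ y, ∑ s₂, p₂ (y, s₂) * Real.log (p₂ (y, s₂) / ∑ y', p₂ (y', s₂)) ≤
      -∑ y, ∑ s₁, p₁ (y, s₁) * Real.log (p₁ (y, s₁) / ∑ y', p₁ (y', s₁)) := by
  rw [neg_le_neg_iff]
  set q₂ : S₂ → ℝ := fun s₂ => ∑ y', p₂ (y', s₂) with hq₂
  have hq₂0 : ∀ s₂, 0 ≤ q₂ s₂ := fun s₂ => Finset.sum_nonneg fun y _ => hp₂0 _
  have hq₂z : ∀ s₂, q₂ s₂ = 0 → ∀ y, p₂ (y, s₂) = 0 := fun s₂ h y =>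
    (Finset.sum_eq_zero_iff_of_nonneg (fun y _ => hp₂0 _)).mp h y (Finset.mem_univ y)
  have hq₁ : ∀ s₁, (∑ y', p₁ (y', s₁)) = ∑ s₂, q₂ s₂ * k (s₂, s₁) := by
    intro s₁
    simp only [hp₁]
    rw [Finset.sum_comm]
    exact Finset.sum_congr rfl fun s₂ _ => by rw [Finset.sum_mul]
  -- Step 1: apply log-sum inequality to each (y, s₁)
  have step1 : ∀ y s₁,
      p₁ (y, s₁) * Real.log (p₁ (y, s₁) / ∑ y', p₁ (y', s₁)) ≤
        ∑ s₂, (p₂ (y, s₂) * k (s₂, s₁)) *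
          Real.log ((p₂ (y, s₂) * k (s₂, s₁)) / (q₂ s₂ * k (s₂, s₁))) := by
    intro y s₁
    rw [hp₁, hq₁]
    exact log_sum_le (fun s₂ => p₂ (y, s₂) * k (s₂, s₁))
      (fun s₂ => q₂ s₂ * k (s₂, s₁))
      (fun s₂ => mul_nonneg (hp₂0 _) (hk0 _))
      (fun s₂ => mul_nonneg (hq₂0 _) (hk0 _))
      (fun s₂ h => by
        rcases mul_eq_zero.mp h with h' | h'
        · rw [hq₂z s₂ h' y, zero_mul]
        · rw [h', mul_zero])
  -- Step 2: sum the RHS over s₁ collapses to the S₂ conditional entropy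
  have step2 : ∀ y s₂,
      (∑ s₁, (p₂ (y, s₂) * k (s₂, s₁)) *
          Real.log ((p₂ (y, s₂) * k (s₂, s₁)) / (q₂ s₂ * k (s₂, s₁))))
        = p₂ (y, s₂) * Real.log (p₂ (y, s₂) / q₂ s₂) := by
    intro y s₂
    have : ∀ s₁, (p₂ (y, s₂) * k (s₂, s₁)) *
        Real.log ((p₂ (y, s₂) * k (s₂, s₁)) / (q₂ s₂ * k (s₂, s₁)))
        = k (s₂, s₁) * (p₂ (y, s₂) * Real.log (p₂ (y, s₂) / q₂ s₂)) := by
      intro s₁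
      by_cases h : k (s₂, s₁) = 0
      · simp [h]
      · rw [mul_div_mul_right _ _ h]; ring
    rw [Finset.sum_congr rfl fun s₁ _ => this s₁, ← Finset.sum_mul, hk1, one_mul]
  calc ∑ y, ∑ s₁, p₁ (y, s₁) * Real.log (p₁ (y, s₁) / ∑ y', p₁ (y', s₁))
      ≤ ∑ y, ∑ s₁, ∑ s₂, (p₂ (y, s₂) * k (s₂, s₁)) *
          Real.log ((p₂ (y, s₂) * k (s₂, s₁)) / (q₂ s₂ * k (s₂, s₁))) :=
        Finset.sum_le_sum fun y _ => Finset.sum_le_sum fun s₁ _ => step1 y s₁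
    _ = ∑ y, ∑ s₂, p₂ (y, s₂) * Real.log (p₂ (y, s₂) / q₂ s₂) := by
        refine Finset.sum_congr rfl fun y _ => ?_
        rw [Finset.sum_comm]
        exact Finset.sum_congr rfl fun s₂ _ => step2 y s₂
end

section
/- Let 𝒴, 𝒮₁, 𝒮₂ be nonempty finite types, let p₂ : 𝒴 × 𝒮₂ → ℝ be a joint probability mass function, let k : 𝒮₂ × 𝒮₁ → ℝ be a Markov kernel, and define p₁(y, s₁) = ∑_{s₂} p₂(y, s₂) · k(s₂, s₁). Then the Bayes error under 0–1 loss is monotone under garbling: min over functions δ : 𝒮₂ → 𝒴 of ∑_{y,s₂ : δ(s₂) ≠ y} p₂(y,s₂) is less than or equal to min over functions δ : 𝒮₁ → 𝒴 of ∑_{y,s₁ : δ(s₁) ≠ y} p₁(y,s₁). -/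
/-- Monotonicity of the Bayes error (0–1 loss) under garbling: if `S₁` is a
garbling of `S₂` relative to `Y`, then the minimal error probability achievable
from observing `S₂` is at most the one achievable from `S₁`. -/
theorem bayes_error_mono_of_garbling
    {Y S₁ S₂ : Type*} [DecidableEq Y] [Fintype Y] [Fintype S₁] [Fintype S₂]
    [Nonempty Y] [Nonempty S₁] [Nonempty S₂]
    (p₂ : Y × S₂ → ℝ) (hp₂0 : ∀ x, 0 ≤ p₂ x) (hp₂1 : ∑ x, p₂ x = 1)
    (k : S₂ × S₁ → ℝ) (hk0 : ∀ x, 0 ≤ k x) (hk1 : ∀ s₂, ∑ s₁, k (s₂, s₁) = 1)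
    (p₁ : Y × S₁ → ℝ)
    (hp₁ : ∀ y s₁, p₁ (y, s₁) = ∑ s₂, p₂ (y, s₂) * k (s₂, s₁)) :
    (⨅ δ : S₂ → Y, ∑ y, ∑ s₂, if δ s₂ ≠ y then p₂ (y, s₂) else 0) ≤
      ⨅ δ : S₁ → Y, ∑ y, ∑ s₁, if δ s₁ ≠ y then p₁ (y, s₁) else 0 := by
  classical
  set e : S₂ → Y → ℝ := fun s₂ a => ∑ y, if a ≠ y then p₂ (y, s₂) else 0 with he
  have hmin : ∀ s₂ : S₂, ∃ a : Y, ∀ b : Y, e s₂ a ≤ e s₂ b := by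
    intro s₂
    obtain ⟨a, -, ha⟩ := Finset.exists_min_image Finset.univ (e s₂) Finset.univ_nonempty
    exact ⟨a, fun b => ha b (Finset.mem_univ b)⟩
  choose δ₂ hδ₂ using hmin
  apply le_ciInf
  intro δ₁
  have hbdd : BddBelow (Set.range fun δ : S₂ → Y =>
      ∑ y, ∑ s₂, if δ s₂ ≠ y then p₂ (y, s₂) else 0) :=
    (Set.finite_range _).bddBelow
  refine le_trans (ciInf_le hbdd δ₂) ?_
  -- rewrite LHS as sum over s₂ of e s₂ (δ₂ s₂)
  have hL : (∑ y, ∑ s₂, if δ₂ s₂ ≠ y then p₂ (y, s₂) else 0)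
      = ∑ s₂, e s₂ (δ₂ s₂) := by
    rw [Finset.sum_comm]
  -- rewrite RHS
  have hR : (∑ y, ∑ s₁, if δ₁ s₁ ≠ y then p₁ (y, s₁) else 0)
      = ∑ s₂, ∑ s₁, k (s₂, s₁) * e s₂ (δ₁ s₁) := by
    rw [Finset.sum_comm]
    rw [Finset.sum_comm (γ := S₂)]
    refine Finset.sum_congr rfl fun s₁ _ => ?_
    simp only [he, Finset.mul_sum, mul_ite, mul_zero]
    rw [Finset.sum_comm]
    refine Finset.sum_congr rfl fun y _ => ?_
    by_cases h : δ₁ s₁ ≠ y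
    · simp only [h, if_true, hp₁]
      simp [mul_comm]
    · simp [h]
  rw [hL, hR]
  refine Finset.sum_le_sum fun s₂ _ => ?_
  calc e s₂ (δ₂ s₂) = ∑ s₁, k (s₂, s₁) * e s₂ (δ₂ s₂) := by
        rw [← Finset.sum_mul, hk1, one_mul]
    _ ≤ ∑ s₁, k (s₂, s₁) * e s₂ (δ₁ s₁) :=
        Finset.sum_le_sum fun s₁ _ =>
          mul_le_mul_of_nonneg_left (hδ₂ s₂ (δ₁ s₁)) (hk0 _)
end

section
/- Let 𝒴, 𝒮₁, 𝒮₂ be nonempty finite types, let D be a nonempty finite type of decisions, let ℓ : 𝒴 × D → ℝ be an arbitrary loss function, let p₂ : 𝒴 × 𝒮₂ → ℝ be a joint probability mass function, let k : 𝒮₂ × 𝒮₁ → ℝ be a Markov kernel, and define p₁(y, s₁) = ∑_{s₂} p₂(y, s₂) · k(s₂, s₁). Then the Bayes risk is monotone under garbling: min over functions δ : 𝒮₂ → D of ∑_{y,s₂} p₂(y,s₂) ℓ(y, δ(s₂)) is less than or equal to min over functions δ : 𝒮₁ → D of ∑_{y,s₁} p₁(y,s₁) ℓ(y, δ(s₁)).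 -/
/-- Monotonicity of the Bayes risk under garbling, for an arbitrary loss
function `ℓ : Y × D → ℝ`: if `S₁` is a garbling of `S₂` relative to `Y`, then
the minimal expected loss achievable from observing `S₂` is at most the one
achievable from `S₁`. -/
theorem bayes_risk_mono_of_garbling
    {Y S₁ S₂ D : Type*} [Fintype Y] [Fintype S₁] [Fintype S₂] [Fintype D]
    [Nonempty Y] [Nonempty S₁] [Nonempty S₂] [Nonempty D]
    (ℓ : Y × D → ℝ)
    (p₂ : Y × S₂ → ℝ) (hp₂0 : ∀ x, 0 ≤ p₂ x) (hp₂1 : ∑ x, p₂ x = 1)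
    (k : S₂ × S₁ → ℝ) (hk0 : ∀ x, 0 ≤ k x) (hk1 : ∀ s₂, ∑ s₁, k (s₂, s₁) = 1)
    (p₁ : Y × S₁ → ℝ)
    (hp₁ : ∀ y s₁, p₁ (y, s₁) = ∑ s₂, p₂ (y, s₂) * k (s₂, s₁)) :
    (⨅ δ : S₂ → D, ∑ y, ∑ s₂, p₂ (y, s₂) * ℓ (y, δ s₂)) ≤
      ⨅ δ : S₁ → D, ∑ y, ∑ s₁, p₁ (y, s₁) * ℓ (y, δ s₁) := by
  classical
  set f : S₂ → D → ℝ := fun s₂ d => ∑ y, p₂ (y, s₂) * ℓ (y, d) with hf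
  have hbdd : BddBelow (Set.range fun δ : S₂ → D =>
      ∑ y, ∑ s₂, p₂ (y, s₂) * ℓ (y, δ s₂)) := (Set.finite_range _).bddBelow
  apply le_ciInf
  intro δ₁
  have hmin : ∀ s₂ : S₂, ∃ d : D, ∀ d' : D, f s₂ d ≤ f s₂ d' := by
    intro s₂
    obtain ⟨d, -, hd⟩ := Finset.exists_min_image Finset.univ (f s₂) ⟨Classical.arbitrary D, Finset.mem_univ _⟩
    exact ⟨d, fun d' => hd d' (Finset.mem_univ _)⟩
  choose δ₂ hδ₂ using hmin
  refine le_trans (ciInf_le hbdd δ₂) ?_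
  have hL : (∑ y, ∑ s₂, p₂ (y, s₂) * ℓ (y, δ₂ s₂)) = ∑ s₂, f s₂ (δ₂ s₂) := by
    rw [Finset.sum_comm]
  have hR : (∑ y, ∑ s₁, p₁ (y, s₁) * ℓ (y, δ₁ s₁))
      = ∑ s₂, ∑ s₁, k (s₂, s₁) * f s₂ (δ₁ s₁) := by
    simp only [hp₁, hf, Finset.sum_mul, Finset.mul_sum]
    rw [Finset.sum_comm]
    conv_rhs => rw [Finset.sum_comm]
    refine Finset.sum_congr rfl fun s₁ _ => ?_
    rw [Finset.sum_comm]
    exact Finset.sum_congr rfl fun s₂ _ =>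
      Finset.sum_congr rfl fun y _ => by ring
  rw [hL, hR]
  refine Finset.sum_le_sum fun s₂ _ => ?_
  calc f s₂ (δ₂ s₂) = ∑ s₁, k (s₂, s₁) * f s₂ (δ₂ s₂) := by
        rw [← Finset.sum_mul, hk1, one_mul]
    _ ≤ ∑ s₁, k (s₂, s₁) * f s₂ (δ₁ s₁) :=
        Finset.sum_le_sum fun s₁ _ =>
          mul_le_mul_of_nonneg_left (hδ₂ s₂ _) (hk0 _)
end

section
/- Fano's inequality (as used in Theorem 1): let 𝒴 and 𝒮 be nonempty finite types with |𝒴| ≥ 2, let p : 𝒴 × 𝒮 → ℝ be a joint probability mass function, and let δ : 𝒮 → 𝒴 be any estimator. Then the error probability P(δ(S) ≠ Y) = ∑_{(y,s) : δ(s) ≠ y} p(y,s) satisfies P(δ(S) ≠ Y) ≥ (H(Y|S) − 1) / log|𝒴|, where H(Y|S) is the conditional entropy in natural logarithm. -/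
/-- Fano's inequality: for a joint pmf `p` on `Y × S` with `|Y| ≥ 2` and any
estimator `δ : S → Y`, the error probability satisfies
`P(δ(S) ≠ Y) ≥ (H(Y|S) - 1) / log |Y|` (natural logarithm). -/
theorem fano_inequality
    {Y S : Type*} [DecidableEq Y] [Fintype Y] [Fintype S] [Nonempty Y] [Nonempty S]
    (hY : 2 ≤ Fintype.card Y)
    (p : Y × S → ℝ) (hp0 : ∀ x, 0 ≤ p x) (hp1 : ∑ x, p x = 1)
    (δ : S → Y) :
    ((-∑ y, ∑ s, p (y, s) * Real.log (p (y, s) / ∑ y', p (y', s))) - 1) /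
        Real.log (Fintype.card Y) ≤
      ∑ y, ∑ s, if δ s ≠ y then p (y, s) else 0 := by
  have hn2 : (2:ℝ) ≤ (Fintype.card Y : ℝ) := by exact_mod_cast hY
  set n : ℝ := (Fintype.card Y : ℝ) with hn
  have hn1 : (1:ℝ) < n := by linarith
  have hlogn : 0 < Real.log n := Real.log_pos hn1
  have hm1 : (1:ℝ) ≤ n - 1 := by linarith
  have hm0 : (0:ℝ) < n - 1 := by linarith
  set c : ℝ := 1 / (2 * (n - 1)) with hc
  have hc0 : 0 < c := by positivity
  set q : Y → S → ℝ := fun y s => if y = δ s then 1/2 else c with hqdef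
  have hq0 : ∀ y s, 0 < q y s := by
    intro y s
    simp only [hqdef]
    split
    · norm_num
    · exact hc0
  set pS : S → ℝ := fun s => ∑ y', p (y', s) with hpSdef
  have hpS0 : ∀ s, 0 ≤ pS s := fun s => Finset.sum_nonneg fun y _ => hp0 _
  have hpSp : ∀ y s, p (y, s) ≤ pS s := fun y s =>
    Finset.single_le_sum (fun y' _ => hp0 (y', s)) (Finset.mem_univ y)
  set Pe : ℝ := ∑ y, ∑ s, if δ s ≠ y then p (y, s) else 0 with hPe
  have hPe0 : 0 ≤ Pe := by
    apply Finset.sum_nonneg; intro y _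
    apply Finset.sum_nonneg; intro s _
    split
    · exact hp0 _
    · exact le_refl 0
  -- key termwise inequality
  have key : ∀ y s, -(p (y, s) * Real.log (p (y, s) / pS s)) ≤
      pS s * q y s - p (y, s) - p (y, s) * Real.log (q y s) := by
    intro y s
    rcases eq_or_lt_of_le (hp0 (y, s)) with h0 | h0
    · rw [← h0]
      simp only [zero_mul, neg_zero, sub_zero, zero_sub]
      have := mul_nonneg (hpS0 s) (hq0 y s).le
      linarith
    · have hps : 0 < pS s := lt_of_lt_of_le h0 (hpSp y s)
      have hq := hq0 y s
      have h1 : Real.log (pS s * q y s / p (y, s)) ≤ pS s * q y s / p (y, s) - 1 :=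
        Real.log_le_sub_one_of_pos (by positivity)
      have h2 : Real.log (pS s * q y s / p (y, s)) =
          Real.log (pS s) + Real.log (q y s) - Real.log (p (y, s)) := by
        rw [Real.log_div (by positivity) h0.ne', Real.log_mul hps.ne' hq.ne']
      have h3 : Real.log (p (y, s) / pS s) = Real.log (p (y, s)) - Real.log (pS s) :=
        Real.log_div h0.ne' hps.ne'
      have h4 := mul_le_mul_of_nonneg_left h1 h0.le
      rw [h2] at h4
      have h5 : p (y, s) * (pS s * q y s / p (y, s) - 1) = pS s * q y s - p (y, s) := by
        field_simp
      rw [h5] at h4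
      rw [h3]
      nlinarith [h4]
  have sum_key : (-∑ y, ∑ s, p (y, s) * Real.log (p (y, s) / pS s)) ≤
      ∑ y, ∑ s, (pS s * q y s - p (y, s) - p (y, s) * Real.log (q y s)) := by
    have : (-∑ y, ∑ s, p (y, s) * Real.log (p (y, s) / pS s)) =
        ∑ y, ∑ s, -(p (y, s) * Real.log (p (y, s) / pS s)) := by
      simp [Finset.sum_neg_distrib]
    rw [this]
    exact Finset.sum_le_sum fun y _ => Finset.sum_le_sum fun s _ => key y s
  -- compute the pieces
  have hsumq : ∀ s, ∑ y, q y s = 1 := by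
    intro s
    have h : ∀ y : Y, q y s = c + (if y = δ s then (1/2 - c : ℝ) else 0) := by
      intro y
      simp only [hqdef]
      split <;> ring
    rw [Finset.sum_congr rfl fun y _ => h y, Finset.sum_add_distrib,
      Finset.sum_const, Finset.sum_ite_eq' Finset.univ (δ s)]
    simp only [Finset.mem_univ, if_true, Finset.card_univ, nsmul_eq_mul]
    rw [hc]
    field_simp
    ring
  have hsumpS : ∑ s, pS s = 1 := by
    rw [← hp1, Fintype.sum_prod_type]
    rw [Finset.sum_comm]
  have hA : ∑ y, ∑ s, pS s * q y s = 1 := by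
    rw [Finset.sum_comm]
    have : ∀ s, ∑ y, pS s * q y s = pS s := by
      intro s
      rw [← Finset.mul_sum, hsumq s, mul_one]
    rw [Finset.sum_congr rfl fun s _ => this s, hsumpS]
  have hB : ∑ y, ∑ s, p (y, s) = 1 := by
    rw [← hp1, Fintype.sum_prod_type]
  have hlogq : ∀ y s, p (y, s) * Real.log (q y s) =
      -(p (y, s) * Real.log 2) - (if δ s ≠ y then p (y, s) else 0) * Real.log (n - 1) := by
    intro y s
    by_cases hy : y = δ s
    · rw [hy, show q (δ s) s = 1/2 from by simp [hqdef],
        if_neg (fun h : δ s ≠ δ s => h rfl), one_div, Real.log_inv]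
      ring
    · have hcond : δ s ≠ y := fun h => hy h.symm
      simp only [hqdef, if_neg hy, if_pos hcond]
      rw [hc, one_div, Real.log_inv, Real.log_mul (by norm_num) hm0.ne']
      ring
  have hC : ∑ y, ∑ s, p (y, s) * Real.log (q y s) =
      -(Real.log 2) - Real.log (n - 1) * Pe := by
    rw [Finset.sum_congr rfl fun y _ => Finset.sum_congr rfl fun s _ => hlogq y s]
    have expand : ∀ y : Y, ∑ s, (-(p (y, s) * Real.log 2) -
        (if δ s ≠ y then p (y, s) else 0) * Real.log (n - 1)) =
        -((∑ s, p (y, s)) * Real.log 2) -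
          (∑ s, if δ s ≠ y then p (y, s) else 0) * Real.log (n - 1) := by
      intro y
      rw [Finset.sum_sub_distrib]
      congr 1
      · rw [Finset.sum_neg_distrib, Finset.sum_mul]
      · rw [← Finset.sum_mul]
    rw [Finset.sum_congr rfl fun y _ => expand y, Finset.sum_sub_distrib]
    congr 1
    · rw [Finset.sum_neg_distrib, ← Finset.sum_mul, hB, one_mul]
    · rw [← Finset.sum_mul, hPe]
      ring
  have main : (-∑ y, ∑ s, p (y, s) * Real.log (p (y, s) / pS s)) ≤
      Real.log 2 + Real.log (n - 1) * Pe := by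
    refine le_trans sum_key ?_
    have : ∑ y, ∑ s, (pS s * q y s - p (y, s) - p (y, s) * Real.log (q y s)) =
        (∑ y, ∑ s, pS s * q y s) - (∑ y, ∑ s, p (y, s)) -
          (∑ y, ∑ s, p (y, s) * Real.log (q y s)) := by
      rw [← Finset.sum_sub_distrib, ← Finset.sum_sub_distrib]
      exact Finset.sum_congr rfl fun y _ => by
        rw [← Finset.sum_sub_distrib, ← Finset.sum_sub_distrib]
    rw [this, hA, hB, hC]
    ring_nf
    linarith
  -- finish
  have hgoal : (∑ y, ∑ s, p (y, s) * Real.log (p (y, s) / ∑ y', p (y', s))) =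
      ∑ y, ∑ s, p (y, s) * Real.log (p (y, s) / pS s) := rfl
  rw [hgoal, div_le_iff₀ hlogn]
  have hlog2 : Real.log 2 ≤ 1 := by
    have := Real.log_le_sub_one_of_pos (by norm_num : (0:ℝ) < 2)
    linarith
  have hmono : Real.log (n - 1) ≤ Real.log n := Real.log_le_log hm0 (by linarith)
  have := mul_le_mul_of_nonneg_right hmono hPe0
  linarith
end

section
/- Theorem 2 (stochastic gradient descent under PL, paper's equation (16)): let E be a finite-dimensional real inner product space, let f : E → ℝ be differentiable with gradient ∇f that is L-Lipschitz (L > 0), suppose f attains a global minimum at θ* and satisfies the Polyak–Łojasiewicz inequality (1/2)‖∇f(θ)‖² ≥ μ (f(θ) − f(θ*)) for all θ, with μ > 0. Let (Ω, ℱ, P) be a probability space, let 𝒢₀ ⊆ 𝒢₁ ⊆ ⋯ ⊆ ℱ be a filtration, let θₖ, gₖ : Ω → E be random variables with θₖ measurable with respect to 𝒢ₖ, gₖ square-integrable, θₖ₊₁ = θₖ − α gₖ pointwise, and suppose the conditional expectations satisfy E[gₖ | 𝒢ₖ] = ∇f(θₖ) almost surely and E[‖gₖ − ∇f(θₖ)‖²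 | 𝒢ₖ] ≤ σ² almost surely, for some σ ≥ 0. Assume f(θₖ) is integrable for all k and the step size satisfies 0 < α ≤ 1/L. Then for all k ≥ 0: E[f(θₖ)] − f(θ*) ≤ (1 − αμ)ᵏ (E[f(θ₀)] − f(θ*)) + (αL/(2μ)) σ². -/
open MeasureTheory

set_option maxHeartbeats 1000000

open RealInnerProductSpace

lemma descent_lemma {E : Type*} [NormedAddCommGroup E] [InnerProductSpace ℝ E]
    [FiniteDimensional ℝ E]
    (f : E → ℝ) (hf : Differentiable ℝ f) (L : ℝ)
    (hLip : ∀ θ θ' : E, ‖gradient f θ - gradient f θ'‖ ≤ L * ‖θ - θ'‖)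
    (x y : E) :
    f y ≤ f x + ⟪gradient f x, y - x⟫ + L / 2 * ‖y - x‖ ^ 2 := by
  set u := y - x with hu
  set φ : ℝ → ℝ := fun t => f (x + t • u) - t * ⟪gradient f x, u⟫ - L / 2 * t ^ 2 * ‖u‖ ^ 2
    with hφ
  have hγ : ∀ t : ℝ, HasDerivAt (fun t : ℝ => x + t • u) u t := by
    intro t
    simpa using ((hasDerivAt_id t).smul_const u).const_add x
  have hder : ∀ t : ℝ, HasDerivAt φ
      (⟪gradient f (x + t • u), u⟫ - ⟪gradient f x, u⟫ - L * t * ‖u‖ ^ 2) t := by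
    intro t
    have h1 : HasDerivAt (fun t : ℝ => f (x + t • u)) ⟪gradient f (x + t • u), u⟫ t := by
      have hg := (hf (x + t • u)).hasGradientAt
      have := hg.hasFDerivAt.comp_hasDerivAt t (hγ t)
      exact this.congr_deriv (by simp [InnerProductSpace.toDual])
    have h2 : HasDerivAt (fun t : ℝ => t * ⟪gradient f x, u⟫) ⟪gradient f x, u⟫ t := by
      simpa using (hasDerivAt_id t).mul_const ⟪gradient f x, u⟫
    have h3 : HasDerivAt (fun t : ℝ => L / 2 * t ^ 2 * ‖u‖ ^ 2) (L * t * ‖u‖ ^ 2) t := by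
      have := ((hasDerivAt_pow 2 t).const_mul (L / 2)).mul_const (‖u‖ ^ 2)
      exact this.congr_deriv (by push_cast; ring)
    exact (h1.sub h2).sub h3
  have hmono : φ 1 ≤ φ 0 := by
    have : AntitoneOn φ (Set.Icc 0 1) := by
      apply antitoneOn_of_deriv_nonpos (convex_Icc 0 1)
      · exact (fun t _ => (hder t).differentiableAt.continuousAt.continuousWithinAt)
      · intro t ht
        exact ((hder t).differentiableAt).differentiableWithinAt
      · intro t ht
        rw [interior_Icc] at ht
        rw [(hder t).deriv]
        have hb : ⟪gradient f (x + t • u) - gradient f x, u⟫ ≤ L * t * ‖u‖ ^ 2 := by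
          calc ⟪gradient f (x + t • u) - gradient f x, u⟫
              ≤ ‖gradient f (x + t • u) - gradient f x‖ * ‖u‖ := real_inner_le_norm _ _
            _ ≤ (L * ‖x + t • u - x‖) * ‖u‖ := by
                gcongr; exact hLip _ _
            _ = L * t * ‖u‖ ^ 2 := by
                rw [add_sub_cancel_left, norm_smul]
                simp [abs_of_pos ht.1]
                ring
        rw [inner_sub_left] at hb
        linarith
    exact this (by simp) (by simp) zero_le_one
  have h0 : φ 0 = f x := by simp [hφ]
  have h1 : φ 1 = f y - ⟪gradient f x, u⟫ - L / 2 * ‖u‖ ^ 2 := by simp [hφ, hu]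
  rw [h0, h1] at hmono
  linarith

lemma condexp_comp_clm {α : Type*} {m m0 : MeasurableSpace α} {μ : Measure α} (hm : m ≤ m0)
    [SigmaFinite (μ.trim hm)] {E F : Type*}
    [NormedAddCommGroup E] [NormedSpace ℝ E] [CompleteSpace E]
    [NormedAddCommGroup F] [NormedSpace ℝ F] [CompleteSpace F]
    (T : E →L[ℝ] F) {f : α → E} (hf : Integrable f μ) :
    (fun ω => T ((μ[f|m]) ω)) =ᵐ[μ] μ[fun ω => T (f ω)|m] := by
  refine ae_eq_condExp_of_forall_setIntegral_eq hm (T.integrable_comp hf)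
    (fun s _ _ => (T.integrable_comp integrable_condExp).integrableOn)
    (fun s hs hμs => ?_) ?_
  · rw [T.integral_comp_comm integrable_condExp.integrableOn,
      T.integral_comp_comm hf.integrableOn, setIntegral_condExp hm hf hs]
  · exact (T.continuous.comp_stronglyMeasurable stronglyMeasurable_condExp).aestronglyMeasurable

/-- Theorem 2 of the paper: stochastic gradient descent on an `L`-smooth
function satisfying the Polyak–Łojasiewicz inequality, with conditionally
unbiased stochastic gradients of conditional variance at most `σ²` with
respect to a filtration `𝒢`, and step size `0 < α ≤ 1/L`, satisfies
`E[f(θₖ)] − f(θ*) ≤ (1 − αμ)ᵏ (E[f(θ₀)] − f(θ*)) + (αL/(2μ)) σ²`. -/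
theorem sgd_PL_convergence
    {E : Type*} [NormedAddCommGroup E] [InnerProductSpace ℝ E]
    [FiniteDimensional ℝ E]
    (f : E → ℝ) (hf : Differentiable ℝ f)
    (L : ℝ) (hL : 0 < L)
    (hLip : ∀ θ θ' : E, ‖gradient f θ - gradient f θ'‖ ≤ L * ‖θ - θ'‖)
    (θstar : E) (hmin : ∀ θ, f θstar ≤ f θ)
    (μ : ℝ) (hμ : 0 < μ)
    (hPL : ∀ θ : E, μ * (f θ - f θstar) ≤ (1 / 2) * ‖gradient f θ‖ ^ 2)
    {Ω : Type*} [mΩ : MeasurableSpace Ω] (P : Measure Ω) [IsProbabilityMeasure P]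
    (𝒢 : Filtration ℕ mΩ)
    (α : ℝ) (hα0 : 0 < α) (hαL : α ≤ 1 / L)
    (θ : ℕ → Ω → E) (g : ℕ → Ω → E)
    (hθmeas : ∀ k, StronglyMeasurable[𝒢 k] (θ k))
    (hgL2 : ∀ k, MemLp (g k) 2 P)
    (hstep : ∀ k, ∀ ω, θ (k + 1) ω = θ k ω - α • g k ω)
    (hmean : ∀ k, P[g k | 𝒢 k] =ᵐ[P] fun ω => gradient f (θ k ω))
    (σ : ℝ) (hσ : 0 ≤ σ)
    (hvar : ∀ k, ∀ᵐ ω ∂P,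
      (P[(fun ω' => ‖g k ω' - gradient f (θ k ω')‖ ^ 2) | 𝒢 k]) ω ≤ σ ^ 2)
    (hint : ∀ k, Integrable (fun ω => f (θ k ω)) P) :
    ∀ k, (∫ ω, f (θ k ω) ∂P) - f θstar ≤
      (1 - α * μ) ^ k * ((∫ ω, f (θ 0 ω) ∂P) - f θstar)
        + (α * L / (2 * μ)) * σ ^ 2 := by
  have hdesc : ∀ x y : E, f y ≤ f x + ⟪gradient f x, y - x⟫ + L / 2 * ‖y - x‖ ^ 2 :=
    descent_lemma f hf L hLip
  have hαL' : α * L ≤ 1 := by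
    rw [← le_div_iff₀ hL] at *; exact hαL
  -- upper bound on the gradient norm
  have hB : ∀ x : E, ‖gradient f x‖ ^ 2 ≤ 2 * L * (f x - f θstar) := by
    intro x
    have h := hdesc x (x - L⁻¹ • gradient f x)
    have h2 : f θstar ≤ f (x - L⁻¹ • gradient f x) := hmin _
    rw [sub_sub_cancel_left, inner_neg_right, real_inner_smul_right,
      real_inner_self_eq_norm_sq, norm_neg, norm_smul] at h
    have hnn : (0:ℝ) ≤ ‖gradient f x‖ ^ 2 := by positivity
    have he : L / 2 * (‖L⁻¹‖ * ‖gradient f x‖) ^ 2 - L⁻¹ * ‖gradient f x‖ ^ 2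
        = -(‖gradient f x‖ ^ 2 / (2 * L)) := by
      rw [Real.norm_eq_abs, abs_of_pos (inv_pos.mpr hL)]
      field_simp
      ring
    have h3 : f θstar ≤ f x - ‖gradient f x‖ ^ 2 / (2 * L) := by nlinarith [h, he]
    have h4 : ‖gradient f x‖ ^ 2 / (2 * L) ≤ f x - f θstar := by linarith
    rw [div_le_iff₀ (by positivity)] at h4
    linarith
  -- continuity of the gradient
  have hGcont : Continuous (gradient f) := by
    have : LipschitzWith (Real.toNNReal L) (gradient f) := by
      apply LipschitzWith.of_dist_le_mul
      intro x y
      rw [dist_eq_norm, dist_eq_norm]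
      simpa [Real.coe_toNNReal L hL.le] using hLip x y
    exact this.continuous
  -- the one-step expected descent
  have key : ∀ k, (∫ ω, f (θ (k+1) ω) ∂P) - f θstar ≤
      (1 - α * μ) * ((∫ ω, f (θ k ω) ∂P) - f θstar) + L * α ^ 2 * σ ^ 2 / 2 := by
    intro k
    have hm : 𝒢 k ≤ mΩ := 𝒢.le k
    have hvSM : StronglyMeasurable[𝒢 k] (fun ω => gradient f (θ k ω)) :=
      hGcont.comp_stronglyMeasurable (hθmeas k)
    have hvSM0 : AEStronglyMeasurable (fun ω => gradient f (θ k ω)) P :=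
      (hvSM.mono hm).aestronglyMeasurable
    have hv2int : Integrable (fun ω => ‖gradient f (θ k ω)‖ ^ 2) P := by
      refine Integrable.mono' (((hint k).sub (integrable_const (f θstar))).const_mul (2*L))
        ((hvSM0.norm.aemeasurable.pow_const 2).aestronglyMeasurable) ?_
      filter_upwards with ω
      rw [Real.norm_eq_abs, abs_of_nonneg (by positivity)]
      exact hB _
    have hvL2 : MemLp (fun ω => gradient f (θ k ω)) 2 P :=
      (memLp_two_iff_integrable_sq_norm hvSM0).mpr hv2int
    have hg2int : Integrable (fun ω => ‖g k ω‖ ^ 2) P :=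
      (memLp_two_iff_integrable_sq_norm (hgL2 k).aestronglyMeasurable).mp (hgL2 k)
    have hNL2 : MemLp (fun ω => g k ω - gradient f (θ k ω)) 2 P := (hgL2 k).sub hvL2
    have hNint : Integrable (fun ω => ‖g k ω - gradient f (θ k ω)‖ ^ 2) P :=
      (memLp_two_iff_integrable_sq_norm hNL2.aestronglyMeasurable).mp hNL2
    have hNle : ∫ ω, ‖g k ω - gradient f (θ k ω)‖ ^ 2 ∂P ≤ σ ^ 2 := by
      rw [← integral_condExp (μ := P) (f := fun ω => ‖g k ω - gradient f (θ k ω)‖ ^ 2) hm]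
      have h2 := integral_mono_ae (μ := P) integrable_condExp (integrable_const (σ ^ 2)) (hvar k)
      simpa using h2
    have hg1 : Integrable (g k) P := (hgL2 k).integrable one_le_two
    -- the inner product identity via an orthonormal basis
    have hinnerInt : Integrable (fun ω => ⟪gradient f (θ k ω), g k ω⟫) P := by
      refine Integrable.mono' ((hv2int.add hg2int).const_mul (1/2))
        (hvSM0.inner (hgL2 k).aestronglyMeasurable) ?_
      filter_upwards with ω
      rw [Real.norm_eq_abs]
      simp only [Pi.add_apply]
      have h1 := abs_real_inner_le_norm (gradient f (θ k ω)) (g k ω)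
      nlinarith [norm_nonneg (gradient f (θ k ω)), norm_nonneg (g k ω),
        sq_nonneg (‖gradient f (θ k ω)‖ - ‖g k ω‖)]
    have hinner : ∫ ω, ⟪gradient f (θ k ω), g k ω⟫ ∂P
        = ∫ ω, ‖gradient f (θ k ω)‖ ^ 2 ∂P := by
      set b := stdOrthonormalBasis ℝ E with hb
      have hbn : ∀ i, ‖b i‖ = 1 := fun i => b.orthonormal.1 i
      have hFSM : ∀ i, StronglyMeasurable[𝒢 k] (fun ω => ⟪gradient f (θ k ω), b i⟫) := by
        intro i
        exact (continuous_id.inner continuous_const).comp_stronglyMeasurable hvSM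
      have hFae : ∀ i, AEStronglyMeasurable (fun ω => ⟪gradient f (θ k ω), b i⟫) P :=
        fun i => ((hFSM i).mono hm).aestronglyMeasurable
      have hGae : ∀ i, AEStronglyMeasurable (fun ω => ⟪b i, g k ω⟫) P :=
        fun i => aestronglyMeasurable_const.inner (hgL2 k).aestronglyMeasurable
      have hGint : ∀ i, Integrable (fun ω => ⟪b i, g k ω⟫) P := by
        intro i
        have := (innerSL ℝ (b i)).integrable_comp hg1
        simpa using this
      have hFGint : ∀ i, Integrable
          ((fun ω => ⟪gradient f (θ k ω), b i⟫) * fun ω => ⟪b i, g k ω⟫) P := by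
        intro i
        refine Integrable.mono' ((hv2int.add hg2int).const_mul (1/2))
          ((hFae i).mul (hGae i)) ?_
        filter_upwards with ω
        rw [Pi.mul_apply, Real.norm_eq_abs, abs_mul]
        simp only [Pi.add_apply]
        have h1 := abs_real_inner_le_norm (gradient f (θ k ω)) (b i)
        have h2 := abs_real_inner_le_norm (b i) (g k ω)
        rw [hbn i] at h1 h2
        have h3 : |⟪gradient f (θ k ω), b i⟫| * |⟪b i, g k ω⟫|
            ≤ (‖gradient f (θ k ω)‖ * 1) * (1 * ‖g k ω‖) :=
          mul_le_mul h1 h2 (abs_nonneg _) (by positivity)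
        nlinarith [sq_nonneg (‖gradient f (θ k ω)‖ - ‖g k ω‖)]
      have hFVint : ∀ i, Integrable
          (fun ω => ⟪gradient f (θ k ω), b i⟫ * ⟪b i, gradient f (θ k ω)⟫) P := by
        intro i
        refine Integrable.mono' (hv2int) ((hFae i).mul
          (aestronglyMeasurable_const.inner hvSM0)) ?_
        filter_upwards with ω
        rw [Real.norm_eq_abs, abs_mul]
        have h1 := abs_real_inner_le_norm (gradient f (θ k ω)) (b i)
        have h2 := abs_real_inner_le_norm (b i) (gradient f (θ k ω))
        rw [hbn i] at h1 h2
        have h3 : |⟪gradient f (θ k ω), b i⟫| * |⟪b i, gradient f (θ k ω)⟫|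
            ≤ (‖gradient f (θ k ω)‖ * 1) * (1 * ‖gradient f (θ k ω)‖) :=
          mul_le_mul h1 h2 (abs_nonneg _) (by positivity)
        nlinarith [h3]
      have hstepi : ∀ i, ∫ ω, ⟪gradient f (θ k ω), b i⟫ * ⟪b i, g k ω⟫ ∂P
          = ∫ ω, ⟪gradient f (θ k ω), b i⟫ * ⟪b i, gradient f (θ k ω)⟫ ∂P := by
        intro i
        have c2 : (P[(fun ω => ⟪b i, g k ω⟫) | 𝒢 k]) =ᵐ[P]
            fun ω => ⟪b i, gradient f (θ k ω)⟫ := by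
          have hc := condexp_comp_clm hm (innerSL ℝ (b i)) hg1
          have hc' : (fun ω => (innerSL ℝ (b i)) ((P[g k|𝒢 k]) ω)) =ᵐ[P]
              fun ω => ⟪b i, gradient f (θ k ω)⟫ := by
            filter_upwards [hmean k] with ω hω
            rw [hω]
            simp
          have hc2 := hc.symm.trans hc'
          simpa using hc2
        have c1 := condExp_mul_of_stronglyMeasurable_left (hFSM i) (hFGint i) (hGint i)
        have c3 : (P[(fun ω => ⟪gradient f (θ k ω), b i⟫) * (fun ω => ⟪b i, g k ω⟫) | 𝒢 k])
            =ᵐ[P] fun ω => ⟪gradient f (θ k ω), b i⟫ * ⟪b i, gradient f (θ k ω)⟫ := by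
          refine c1.trans ?_
          filter_upwards [c2] with ω hω
          rw [Pi.mul_apply, hω]
        calc ∫ ω, ⟪gradient f (θ k ω), b i⟫ * ⟪b i, g k ω⟫ ∂P
            = ∫ ω, (P[(fun ω => ⟪gradient f (θ k ω), b i⟫) * (fun ω => ⟪b i, g k ω⟫) | 𝒢 k]) ω ∂P :=
              (integral_condExp (μ := P)
                (f := (fun ω => ⟪gradient f (θ k ω), b i⟫) * (fun ω => ⟪b i, g k ω⟫)) hm).symm
          _ = ∫ ω, ⟪gradient f (θ k ω), b i⟫ * ⟪b i, gradient f (θ k ω)⟫ ∂P :=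
              integral_congr_ae c3
      calc ∫ ω, ⟪gradient f (θ k ω), g k ω⟫ ∂P
          = ∫ ω, ∑ i, ⟪gradient f (θ k ω), b i⟫ * ⟪b i, g k ω⟫ ∂P := by
            refine integral_congr_ae (Filter.Eventually.of_forall fun ω => ?_)
            exact (b.sum_inner_mul_inner _ _).symm
        _ = ∑ i, ∫ ω, ⟪gradient f (θ k ω), b i⟫ * ⟪b i, g k ω⟫ ∂P :=
            integral_finset_sum _ (fun i _ => hFGint i)
        _ = ∑ i, ∫ ω, ⟪gradient f (θ k ω), b i⟫ * ⟪b i, gradient f (θ k ω)⟫ ∂P :=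
            Finset.sum_congr rfl (fun i _ => hstepi i)
        _ = ∫ ω, ∑ i, ⟪gradient f (θ k ω), b i⟫ * ⟪b i, gradient f (θ k ω)⟫ ∂P :=
            (integral_finset_sum _ (fun i _ => hFVint i)).symm
        _ = ∫ ω, ‖gradient f (θ k ω)‖ ^ 2 ∂P := by
            refine integral_congr_ae (Filter.Eventually.of_forall fun ω => ?_)
            exact (b.sum_inner_mul_inner _ _).trans (real_inner_self_eq_norm_sq _)
    -- pointwise descent step
    have hkey : ∀ ω, f (θ (k+1) ω) ≤ f (θ k ω) - α * ⟪gradient f (θ k ω), g k ω⟫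
        + L * α ^ 2 / 2 * ‖g k ω‖ ^ 2 := by
      intro ω
      rw [hstep k ω]
      have h := hdesc (θ k ω) (θ k ω - α • g k ω)
      rw [sub_sub_cancel_left, inner_neg_right, real_inner_smul_right,
        norm_neg, norm_smul, Real.norm_eq_abs, abs_of_pos hα0, mul_pow] at h
      nlinarith [h]
    -- integrate
    have hRHSint : Integrable (fun ω => f (θ k ω) - α * ⟪gradient f (θ k ω), g k ω⟫
        + L * α ^ 2 / 2 * ‖g k ω‖ ^ 2) P :=
      ((hint k).sub (hinnerInt.const_mul α)).add (hg2int.const_mul (L * α ^ 2 / 2))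
    have hI1 : ∫ ω, f (θ (k+1) ω) ∂P ≤ ∫ ω, (f (θ k ω)
        - α * ⟪gradient f (θ k ω), g k ω⟫ + L * α ^ 2 / 2 * ‖g k ω‖ ^ 2) ∂P :=
      integral_mono (hint (k+1)) hRHSint hkey
    have hI2 : ∫ ω, (f (θ k ω) - α * ⟪gradient f (θ k ω), g k ω⟫
        + L * α ^ 2 / 2 * ‖g k ω‖ ^ 2) ∂P
        = (∫ ω, f (θ k ω) ∂P) - α * (∫ ω, ⟪gradient f (θ k ω), g k ω⟫ ∂P)
          + L * α ^ 2 / 2 * (∫ ω, ‖g k ω‖ ^ 2 ∂P) := by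
      have i2 : Integrable (fun ω => f (θ k ω) - α * ⟪gradient f (θ k ω), g k ω⟫) P :=
        (hint k).sub (hinnerInt.const_mul α)
      have i3 : Integrable (fun ω => L * α ^ 2 / 2 * ‖g k ω‖ ^ 2) P :=
        hg2int.const_mul (L * α ^ 2 / 2)
      have i4 : Integrable (fun ω => α * ⟪gradient f (θ k ω), g k ω⟫) P :=
        hinnerInt.const_mul α
      rw [integral_add i2 i3, integral_sub (hint k) i4, integral_const_mul, integral_const_mul]
    -- Pythagoras-type identity
    have hgdecomp : ∫ ω, ‖g k ω‖ ^ 2 ∂P = (∫ ω, ‖g k ω - gradient f (θ k ω)‖ ^ 2 ∂P)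
        + ∫ ω, ‖gradient f (θ k ω)‖ ^ 2 ∂P := by
      have hpt : (fun ω => ‖g k ω‖ ^ 2) = fun ω => (‖g k ω - gradient f (θ k ω)‖ ^ 2
          + 2 * ⟪gradient f (θ k ω), g k ω⟫ - ‖gradient f (θ k ω)‖ ^ 2) := by
        funext ω
        have h := norm_sub_sq_real (g k ω) (gradient f (θ k ω))
        rw [real_inner_comm] at h
        linarith
      have i1 : Integrable (fun ω => ‖g k ω - gradient f (θ k ω)‖ ^ 2
          + 2 * ⟪gradient f (θ k ω), g k ω⟫) P := hNint.add (hinnerInt.const_mul 2)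
      have i5 : Integrable (fun ω => 2 * ⟪gradient f (θ k ω), g k ω⟫) P :=
        hinnerInt.const_mul 2
      rw [hpt, integral_sub i1 hv2int, integral_add hNint i5, integral_const_mul, hinner]
      ring
    -- integrated PL inequality
    have hPLint : 2 * μ * ((∫ ω, f (θ k ω) ∂P) - f θstar)
        ≤ ∫ ω, ‖gradient f (θ k ω)‖ ^ 2 ∂P := by
      have h1 : ∫ ω, (2 * μ * (f (θ k ω) - f θstar)) ∂P
          ≤ ∫ ω, ‖gradient f (θ k ω)‖ ^ 2 ∂P := by
        refine integral_mono (((hint k).sub (integrable_const _)).const_mul (2*μ)) hv2int ?_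
        intro ω
        have := hPL (θ k ω)
        simp only
        linarith
      rw [integral_const_mul, integral_sub (hint k) (integrable_const _)] at h1
      simpa using h1
    have hV0 : 0 ≤ ∫ ω, ‖gradient f (θ k ω)‖ ^ 2 ∂P :=
      integral_nonneg (fun ω => by positivity)
    have hN0 : 0 ≤ ∫ ω, ‖g k ω - gradient f (θ k ω)‖ ^ 2 ∂P :=
      integral_nonneg (fun ω => by positivity)
    -- combine
    have hmain := hI1
    rw [hI2, hinner, hgdecomp] at hmain
    have e1 : L * α ^ 2 / 2 * (∫ ω, ‖gradient f (θ k ω)‖ ^ 2 ∂P)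
        ≤ α / 2 * (∫ ω, ‖gradient f (θ k ω)‖ ^ 2 ∂P) := by
      nlinarith [mul_nonneg (mul_nonneg hα0.le hV0) (sub_nonneg.mpr hαL')]
    have e2 : L * α ^ 2 / 2 * (∫ ω, ‖g k ω - gradient f (θ k ω)‖ ^ 2 ∂P)
        ≤ L * α ^ 2 / 2 * σ ^ 2 :=
      mul_le_mul_of_nonneg_left hNle (by positivity)
    have e3 := mul_le_mul_of_nonneg_left hPLint (by positivity : (0:ℝ) ≤ α / 2)
    nlinarith [hmain, e1, e2, e3]
  -- final induction
  intro k
  by_cases hconst : ∀ x : E, f x ≤ f θstar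
  · have hfeq : ∀ x : E, f x = f θstar := fun x => le_antisymm (hconst x) (hmin x)
    have hDk : ∀ j, ∫ ω, f (θ j ω) ∂P = f θstar := by
      intro j
      simp only [hfeq]
      simp
    rw [hDk k, hDk 0]
    simp only [sub_self, mul_zero, zero_add]
    positivity
  · push_neg at hconst
    obtain ⟨x0, hx0⟩ := hconst
    have hμL : μ ≤ L := by
      have h1 := hPL x0
      have h2 := hB x0
      nlinarith [sub_pos.mpr hx0]
    have hr0 : 0 ≤ 1 - α * μ := by
      have h1 : α * μ ≤ α * L := by nlinarith [hα0.le]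
      linarith
    induction k with
    | zero =>
      simp only [pow_zero, one_mul]
      have : 0 ≤ α * L / (2 * μ) * σ ^ 2 := by positivity
      linarith
    | succ n ih =>
      have h1 := key n
      have h2 : (1 - α * μ) * ((∫ ω, f (θ n ω) ∂P) - f θstar)
          ≤ (1 - α * μ) * ((1 - α * μ) ^ n * ((∫ ω, f (θ 0 ω) ∂P) - f θstar)
            + α * L / (2 * μ) * σ ^ 2) :=
        mul_le_mul_of_nonneg_left ih hr0
      have h3 : (1 - α * μ) * ((1 - α * μ) ^ n * ((∫ ω, f (θ 0 ω) ∂P) - f θstar)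
            + α * L / (2 * μ) * σ ^ 2) + L * α ^ 2 * σ ^ 2 / 2
          = (1 - α * μ) ^ (n + 1) * ((∫ ω, f (θ 0 ω) ∂P) - f θstar)
            + α * L / (2 * μ) * σ ^ 2 := by
        rw [pow_succ]
        field_simp
        ring
      linarith
end

section
/- One-step contraction under PL (intermediate inequality in the proof of Theorem 2): let E be a finite-dimensional real inner product space, let f : E → ℝ be differentiable with L-Lipschitz gradient (L > 0), attaining a global minimum at θ* and satisfying the Polyak–Łojasiewicz inequality (1/2)‖∇f(θ)‖² ≥ μ (f(θ) − f(θ*)) for all θ, with μ > 0. Fix θ ∈ E, a step size α with 0 < α ≤ 1/L, and let g : Ω → E be a square-integrable random vector on a probability space with E[g] = ∇f(θ) and E[‖g − ∇f(θ)‖²] ≤ σ². Then E[f(θ − α g)] − f(θ*) ≤ (1 − αμ)(f(θ) − f(θ*)) + (Lα²/2)σ². -/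
open MeasureTheory

open scoped RealInnerProductSpace

/-- Sharp descent lemma: for `f` with `L`-Lipschitz gradient,
`f (x + v) ≤ f x + ⟪∇f x, v⟫ + (L/2)‖v‖²`. -/
lemma descent_lemma_aux {E : Type*} [NormedAddCommGroup E] [InnerProductSpace ℝ E]
    [FiniteDimensional ℝ E]
    (f : E → ℝ) (hf : Differentiable ℝ f) (L : ℝ) (hL : 0 ≤ L)
    (hLip : ∀ θ θ' : E, ‖gradient f θ - gradient f θ'‖ ≤ L * ‖θ - θ'‖)
    (x v : E) :
    f (x + v) ≤ f x + ⟪gradient f x, v⟫ + L / 2 * ‖v‖ ^ 2 := by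
  have hgc : Continuous fun y => gradient f y := by
    have hlip : LipschitzWith L.toNNReal (gradient f) :=
      LipschitzWith.of_dist_le_mul (fun a b => by
        simpa [dist_eq_norm, Real.coe_toNNReal L hL] using hLip a b)
    exact hlip.continuous
  have hc : ∀ t : ℝ, HasDerivAt (fun s : ℝ => x + s • v) v t := fun t => by
    simpa using ((hasDerivAt_id t).smul_const v).const_add x
  have hderiv : ∀ t : ℝ, HasDerivAt (fun s : ℝ => f (x + s • v))
      ⟪gradient f (x + t • v), v⟫ t := by
    intro t
    have h1 := (hf (x + t • v)).hasGradientAt.hasFDerivAt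
    have h2 := h1.comp_hasDerivAt t (hc t)
    convert h2 using 1
    all_goals rfl
  have hcont2 : Continuous fun t : ℝ => ⟪gradient f (x + t • v), v⟫ :=
    (hgc.comp (by continuity)).inner continuous_const
  have key : ∫ t in (0:ℝ)..1, ⟪gradient f (x + t • v), v⟫ = f (x + v) - f x := by
    have := intervalIntegral.integral_eq_sub_of_hasDerivAt
      (f := fun s : ℝ => f (x + s • v)) (fun t _ => hderiv t)
      (hcont2.intervalIntegrable 0 1)
    simpa using this
  have hb : ∫ t in (0:ℝ)..1, ⟪gradient f (x + t • v), v⟫ ≤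
      ∫ t in (0:ℝ)..1, (⟪gradient f x, v⟫ + L * ‖v‖ ^ 2 * t) := by
    apply intervalIntegral.integral_mono_on (by norm_num)
      (hcont2.intervalIntegrable 0 1)
      (by apply Continuous.intervalIntegrable; continuity)
    intro t ht
    have h1 : ⟪gradient f (x + t • v) - gradient f x, v⟫ ≤
        ‖gradient f (x + t • v) - gradient f x‖ * ‖v‖ := real_inner_le_norm _ _
    have h2 : ‖gradient f (x + t • v) - gradient f x‖ ≤ L * (t * ‖v‖) := by
      have := hLip (x + t • v) x
      simpa [norm_smul, abs_of_nonneg ht.1] using this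
    have h3 : ⟪gradient f (x + t • v), v⟫ =
        ⟪gradient f x, v⟫ + ⟪gradient f (x + t • v) - gradient f x, v⟫ := by
      rw [inner_sub_left]; ring
    nlinarith [norm_nonneg v, norm_nonneg (gradient f (x + t • v) - gradient f x)]
  have hR : ∫ t in (0:ℝ)..1, (⟪gradient f x, v⟫ + L * ‖v‖ ^ 2 * t) =
      ⟪gradient f x, v⟫ + L / 2 * ‖v‖ ^ 2 := by
    rw [intervalIntegral.integral_add (intervalIntegrable_const)
      ((intervalIntegral.intervalIntegrable_id).const_mul _),
      intervalIntegral.integral_const, intervalIntegral.integral_const_mul,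
      integral_id]
    norm_num; ring
  linarith [key ▸ (hR ▸ hb)]

/-- One-step contraction under the Polyak–Łojasiewicz inequality: for an
`L`-smooth `f` with global minimizer `θ*` satisfying PL with constant `μ`,
a stochastic gradient step with step size `0 < α ≤ 1/L`, unbiased gradient
estimate and variance at most `σ²` satisfies
`E[f(θ − αg)] − f(θ*) ≤ (1 − αμ)(f(θ) − f(θ*)) + (Lα²/2)σ²`. -/
theorem sgd_one_step_contraction_PL
    {E : Type*} [NormedAddCommGroup E] [InnerProductSpace ℝ E]
    [FiniteDimensional ℝ E]
    (f : E → ℝ) (hf : Differentiable ℝ f)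
    (L : ℝ) (hL : 0 < L)
    (hLip : ∀ θ θ' : E, ‖gradient f θ - gradient f θ'‖ ≤ L * ‖θ - θ'‖)
    (θstar : E) (hmin : ∀ θ, f θstar ≤ f θ)
    (μ : ℝ) (hμ : 0 < μ)
    (hPL : ∀ θ : E, μ * (f θ - f θstar) ≤ (1 / 2) * ‖gradient f θ‖ ^ 2)
    (θ : E) (α : ℝ) (hα0 : 0 < α) (hαL : α ≤ 1 / L)
    {Ω : Type*} [MeasurableSpace Ω] (P : Measure Ω) [IsProbabilityMeasure P]
    (g : Ω → E) (hg : MemLp g 2 P)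
    (hmean : ∫ ω, g ω ∂P = gradient f θ)
    (σ : ℝ) (hvar : ∫ ω, ‖g ω - gradient f θ‖ ^ 2 ∂P ≤ σ ^ 2) :
    ∫ ω, f (θ - α • g ω) ∂P - f θstar ≤
      (1 - α * μ) * (f θ - f θstar) + (L * α ^ 2 / 2) * σ ^ 2 := by
  set G := gradient f θ with hG
  have hgi : Integrable g P := hg.integrable one_le_two
  have hgsm := hg.aestronglyMeasurable
  have hg2 : Integrable (fun ω => ‖g ω‖ ^ 2) P :=
    (memLp_two_iff_integrable_sq_norm hgsm).1 hg
  have hL' : (0:ℝ) ≤ L := hL.le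
  -- pointwise descent bound
  have hdesc : ∀ ω, f (θ - α • g ω) ≤
      f θ - α * ⟪G, g ω⟫ + L * α ^ 2 / 2 * ‖g ω‖ ^ 2 := by
    intro ω
    have h := descent_lemma_aux f hf L hL' hLip θ (-(α • g ω))
    rw [← sub_eq_add_neg] at h
    have e1 : ⟪G, -(α • g ω)⟫ = -(α * ⟪G, g ω⟫) := by
      rw [inner_neg_right, real_inner_smul_right]
    have e2 : ‖-(α • g ω)‖ ^ 2 = α ^ 2 * ‖g ω‖ ^ 2 := by
      rw [norm_neg, norm_smul, mul_pow, Real.norm_eq_abs, sq_abs]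
    rw [e1, e2] at h
    linarith
  -- integrability of the upper bound and of the integrand
  have hU : Integrable (fun ω => f θ - α * ⟪G, g ω⟫ + L * α ^ 2 / 2 * ‖g ω‖ ^ 2) P :=
    ((integrable_const (f θ)).sub ((hgi.const_inner G).const_mul α)).add
      (hg2.const_mul _)
  have hmeas : AEStronglyMeasurable (fun ω => f (θ - α • g ω)) P := by
    have hc : Continuous fun y : E => f (θ - α • y) :=
      hf.continuous.comp (continuous_const.sub (continuous_const_smul α))
    exact hc.comp_aestronglyMeasurable hgsm
  have hInt : Integrable (fun ω => f (θ - α • g ω)) P := by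
    refine (hU.abs.add (integrable_const |f θstar|)).mono' hmeas ?_
    filter_upwards with ω
    have h1 := hdesc ω
    have h2 := hmin (θ - α • g ω)
    rw [Real.norm_eq_abs, abs_le]
    constructor
    · have := neg_abs_le (f θstar); simp only [Pi.add_apply]
      linarith [abs_nonneg (f θ - α * ⟪G, g ω⟫ + L * α ^ 2 / 2 * ‖g ω‖ ^ 2)]
    · have := le_abs_self (f θ - α * ⟪G, g ω⟫ + L * α ^ 2 / 2 * ‖g ω‖ ^ 2)
      simp only [Pi.add_apply]; linarith [abs_nonneg (f θstar)]
  have hIle : ∫ ω, f (θ - α • g ω) ∂P ≤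
      ∫ ω, (f θ - α * ⟪G, g ω⟫ + L * α ^ 2 / 2 * ‖g ω‖ ^ 2) ∂P :=
    integral_mono hInt hU hdesc
  have hR : ∫ ω, (f θ - α * ⟪G, g ω⟫ + L * α ^ 2 / 2 * ‖g ω‖ ^ 2) ∂P =
      f θ - α * ‖G‖ ^ 2 + L * α ^ 2 / 2 * ∫ ω, ‖g ω‖ ^ 2 ∂P := by
    have hU1 : Integrable (fun ω => f θ - α * ⟪G, g ω⟫) P :=
      (integrable_const (f θ)).sub ((hgi.const_inner G).const_mul α)
    rw [integral_add hU1 (hg2.const_mul _),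
      integral_sub (integrable_const (f θ)) ((hgi.const_inner G).const_mul α),
      integral_const, integral_const_mul, integral_const_mul, integral_inner hgi G,
      hmean, real_inner_self_eq_norm_sq]
    simp
  -- variance decomposition
  have hvar2 : ∫ ω, ‖g ω‖ ^ 2 ∂P = ‖G‖ ^ 2 + ∫ ω, ‖g ω - G‖ ^ 2 ∂P := by
    have hgG : MemLp (fun ω => g ω - G) 2 P := hg.sub (memLp_const G)
    have hgG2 : Integrable (fun ω => ‖g ω - G‖ ^ 2) P :=
      (memLp_two_iff_integrable_sq_norm hgG.aestronglyMeasurable).1 hgG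
    have hgGi : Integrable (fun ω => g ω - G) P := hgi.sub (integrable_const G)
    have expand : ∀ ω, ‖g ω‖ ^ 2 =
        ‖g ω - G‖ ^ 2 + 2 * ⟪G, g ω - G⟫ + ‖G‖ ^ 2 := by
      intro ω
      have h := norm_add_sq_real (g ω - G) G
      have : g ω - G + G = g ω := by abel
      rw [this] at h
      rw [h, real_inner_comm]
    calc ∫ ω, ‖g ω‖ ^ 2 ∂P
        = ∫ ω, (‖g ω - G‖ ^ 2 + 2 * ⟪G, g ω - G⟫ + ‖G‖ ^ 2) ∂P := by
          congr 1; funext ω; exact expand ω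
      _ = ‖G‖ ^ 2 + ∫ ω, ‖g ω - G‖ ^ 2 ∂P := by
          have hA : Integrable (fun ω => ‖g ω - G‖ ^ 2 + 2 * ⟪G, g ω - G⟫) P :=
            hgG2.add ((hgGi.const_inner G).const_mul 2)
          rw [integral_add hA (integrable_const _),
            integral_add hgG2 ((hgGi.const_inner G).const_mul 2),
            integral_const, integral_const_mul, integral_inner hgGi G,
            integral_sub hgi (integrable_const G), integral_const, hmean]
          simp [← hG]
          ring
  have hV0 : 0 ≤ ∫ ω, ‖g ω - G‖ ^ 2 ∂P := integral_nonneg fun ω => sq_nonneg _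
  have hgap : 0 ≤ f θ - f θstar := sub_nonneg.2 (hmin θ)
  have hPLθ := hPL θ
  have hαL' : α * L ≤ 1 := by
    rw [le_div_iff₀ hL] at hαL; exact hαL
  rw [hvar2] at hR
  rw [hR] at hIle
  nlinarith [mul_le_mul_of_nonneg_left hPLθ hα0.le,
    mul_nonneg (mul_nonneg hL' (sq_nonneg α)) (sub_nonneg.2 hvar),
    mul_nonneg (mul_nonneg (sub_nonneg.2 hαL') hα0.le) (sq_nonneg ‖G‖)]
end
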